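/- Let n ≥ 1 and m ≥ 1, let X = Fin n → ZMod 2 and Ym = Fin m → ZMod 2, let E be a finite nonempty type (the algorithm's workspace), and consider H = EuclideanSpace ℂ (X × Ym × E × (X → Ym)). Let U_FO be the Fourier Oracle unitary acting on the X, Ym and F = (X → Ym) registers (and as the identity on E), and for each l let P_l be the orthogonal projection onto the span of standard basis vectors whose F-component r has exactly l nonzero entries. Let q ≥ 0, let A₀, …, A_q be arbitrary unitaries on EuclideanSpace ℂ (X × Ym × E), each extended by the identity on the F-register, let ψ₀ be any unit vector of EuclideanSpace ℂ (X × Ym × E), and let r₀ : X → Ym be the all-zero function. Then the state ψ := A_q · U_FO · A_{q−1} · ⋯ · U_FO · A₀ · (ψ₀ ⊗ e_{r₀}) satisfies P_l ψ = 0 for every l > q. -/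

import Mathlib

set_option synthInstance.maxSize 1024

noncomputable section

variable (n m : ℕ) (E : Type*) [Fintype E] [DecidableEq E] [Nonempty E]

/-- Index set of the computational basis: query input register `X = Fin n → ZMod 2`,
query output register `Ym = Fin m → ZMod 2`, workspace `E`, Fourier Oracle register `X → Ym`. -/
abbrev QIdx :=
  (Fin n → ZMod 2) × (Fin m → ZMod 2) × E × ((Fin n → ZMod 2) → (Fin m → ZMod 2))

/-- Index set of the algorithm's registers (without the Fourier Oracle register). -/
abbrev AIdx := (Fin n → ZMod 2) × (Fin m → ZMod 2) × E

/-- The standard oracle unitary `U_O`, the permutation matrix induced on standard basis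
vectors by `(x, y, z, r) ↦ (x, y + r x, z, r)`. -/
def UOmat : Matrix (QIdx n m E) (QIdx n m E) ℂ := fun p q =>
  if p = (q.1, q.2.1 + q.2.2.2 q.1, q.2.2.1, q.2.2.2) then 1 else 0

/-- The Hadamard transform `H_F` on the Fourier-Oracle register (identity on `X × Ym × E`),
with `F`-register matrix entries `⟨e_s, H_F e_r⟩ = 2^{-m·2ⁿ/2} (-1)^{Σ_{x''} Σ_j (r x'' j)(s x'' j)}`. -/
def HFmat : Matrix (QIdx n m E) (QIdx n m E) ℂ := fun p q =>
  if p.1 = q.1 ∧ p.2.1 = q.2.1 ∧ p.2.2.1 = q.2.2.1 then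
    ((((Real.sqrt 2) ^ (m * 2 ^ n))⁻¹ : ℝ) : ℂ) *
      (-1 : ℂ) ^
        (∑ x'' : Fin n → ZMod 2, ∑ j : Fin m, (q.2.2.2 x'' j).val * (p.2.2.2 x'' j).val)
  else 0

/-- The Fourier Oracle unitary `U_FO = H_F · U_O · H_F`. -/
def UFOmat : Matrix (QIdx n m E) (QIdx n m E) ℂ :=
  HFmat n m E * UOmat n m E * HFmat n m E

/-- Extension of a unitary on the algorithm's registers by the identity on the
Fourier-Oracle register. -/
def extMat (A : Matrix (AIdx n m E) (AIdx n m E) ℂ) :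
    Matrix (QIdx n m E) (QIdx n m E) ℂ := fun p q =>
  if p.2.2.2 = q.2.2.2 then A (p.1, p.2.1, p.2.2.1) (q.1, q.2.1, q.2.2.1) else 0

/-- `P l`: the orthogonal projection onto the span of the standard basis vectors whose
`F`-component has exactly `l` nonzero entries. -/
def Pmat (l : ℕ) : Matrix (QIdx n m E) (QIdx n m E) ℂ := fun p q =>
  if p = q ∧ (Finset.univ.filter fun x' : Fin n → ZMod 2 => p.2.2.2 x' ≠ 0).card = l
  then 1 else 0

/-- The circuit matrix `A q · U_FO · A (q-1) · ⋯ · U_FO · A 0` (each `A i` extended by the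
identity on the `F`-register). -/
def circuitMat : (q : ℕ) → (Fin (q + 1) → Matrix (AIdx n m E) (AIdx n m E) ℂ) →
    Matrix (QIdx n m E) (QIdx n m E) ℂ
  | 0, A => extMat n m E (A 0)
  | q + 1, A =>
      extMat n m E (A (Fin.last (q + 1))) * UFOmat n m E *
        circuitMat q (fun i => A i.castSucc)

end

/-!
The Fourier Oracle changes the oracle register `r` at most at the queried input `x`.
Expanding `U_FO = H_F U_O H_F` as a sum over the intermediate register `s`, translating `s` by
one bit at a position `(x', j)` with `x' ≠ x` does not affect `U_O`, which only reads `s x`, and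
multiplies the summand by `(-1)^(r x' j + r' x' j)`, where `r`, `r'` are the input and output
registers. If these differ at `(x', j)` the sign is `-1` and the matrix entry vanishes. The
unitaries `A i` do not touch `r`, so after `q` queries the register is within Hamming distance `q`
of its initial value `0`.
-/

open Finset
open scoped Matrix

lemma Fintype.sum_eq_zero_of_add_left_eq_neg {G M : Type*} [AddGroup G] [Fintype G]
    [AddCommGroup M] [IsAddTorsionFree M] {f : G → M} (g : G) (hf : ∀ x, f (g + x) = -f x) :
    ∑ x, f x = 0 := by
  have h := Fintype.sum_equiv (Equiv.addLeft g) (fun x => f (g + x)) f fun _ => rfl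
  simp only [hf, sum_neg_distrib] at h
  exact self_eq_neg.mp h.symm

lemma neg_one_pow_eq_of_natCast_eq {R : Type*} [Monoid R] [HasDistribNeg R] {a b : ℕ}
    (h : (a : ZMod 2) = b) : (-1 : R) ^ a = (-1) ^ b :=
  neg_one_pow_congr (by rw [← ZMod.natCast_eq_zero_iff_even, ← ZMod.natCast_eq_zero_iff_even, h])

lemma neg_one_pow_val_mul_neg_one_pow_val {a b : ZMod 2} (h : a ≠ b) :
    (-1 : ℂ) ^ a.val * (-1) ^ b.val = -1 := by
  rw [← pow_add, neg_one_pow_eq_of_natCast_eq (b := 1), pow_one]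
  push_cast [ZMod.natCast_val, ZMod.cast_id', id]
  revert a b; decide

lemma hammingDist_le_one_of_forall_ne {ι : Type*} [Fintype ι] {β : ι → Type*}
    [∀ i, DecidableEq (β i)] {x y : ∀ i, β i} (i₀ : ι) (h : ∀ i ≠ i₀, x i = y i) :
    hammingDist x y ≤ 1 :=
  card_le_one.mpr fun i hi i' hi' => by
    simp only [mem_filter, mem_univ, true_and] at hi hi'
    exact (not_imp_comm.mp (h i) hi).trans (not_imp_comm.mp (h i') hi').symm

section HadamardSign

variable {ι κ : Type*} [Fintype ι] [Fintype κ]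

def hadamardSign (s t : ι → κ → ZMod 2) : ℂ :=
  (-1) ^ ∑ i, ∑ k, (s i k).val * (t i k).val

lemma natCast_sum_sum_val_mul_val (s t : ι → κ → ZMod 2) :
    ((∑ i, ∑ k, (s i k).val * (t i k).val : ℕ) : ZMod 2) = ∑ i, ∑ k, s i k * t i k := by
  push_cast [ZMod.natCast_val, ZMod.cast_id', id]
  rfl

lemma hadamardSign_comm (s t : ι → κ → ZMod 2) : hadamardSign s t = hadamardSign t s := by
  simp only [hadamardSign, mul_comm]

lemma hadamardSign_add_left (s s' t : ι → κ → ZMod 2) :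
    hadamardSign (s + s') t = hadamardSign s t * hadamardSign s' t := by
  rw [hadamardSign, hadamardSign, hadamardSign, ← pow_add]
  apply neg_one_pow_eq_of_natCast_eq
  rw [Nat.cast_add, natCast_sum_sum_val_mul_val, natCast_sum_sum_val_mul_val,
    natCast_sum_sum_val_mul_val]
  simp only [Pi.add_apply, add_mul, sum_add_distrib]

lemma hadamardSign_single_left [DecidableEq ι] [DecidableEq κ] (i : ι) (k : κ)
    (t : ι → κ → ZMod 2) : hadamardSign (Pi.single i (Pi.single k 1)) t = (-1) ^ (t i k).val := by
  rw [hadamardSign]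
  apply neg_one_pow_eq_of_natCast_eq
  rw [natCast_sum_sum_val_mul_val, ZMod.natCast_val, ZMod.cast_id', id]
  simp [Pi.single_apply, ite_apply, ite_mul]

end HadamardSign

namespace Matrix

variable {ι α R : Type*} {β : α → Type*} [Fintype α] [∀ a, DecidableEq (β a)]

def HammingLocal [Zero R] (f : ι → ∀ a, β a) (k : ℕ) (M : Matrix ι ι R) : Prop :=
  ∀ i j, M i j ≠ 0 → hammingDist (f i) (f j) ≤ k

variable [Fintype ι] [NonUnitalNonAssocSemiring R] {f : ι → ∀ a, β a}

lemma HammingLocal.mul {k k' : ℕ} {M N : Matrix ι ι R} (hM : M.HammingLocal f k)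
    (hN : N.HammingLocal f k') : (M * N).HammingLocal f (k + k') := fun i i' h => by
  obtain ⟨j, -, hj⟩ := exists_ne_zero_of_sum_ne_zero h
  exact (hammingDist_triangle _ (f j) _).trans
    (add_le_add (hM i j (left_ne_zero_of_mul hj)) (hN j i' (right_ne_zero_of_mul hj)))

lemma HammingLocal.mulVec_apply_eq_zero [∀ a, Zero (β a)] {k : ℕ} {M : Matrix ι ι R}
    (hM : M.HammingLocal f k) {v : ι → R} (hv : ∀ j, v j ≠ 0 → f j = 0) {i : ι}
    (hi : k < hammingNorm (f i)) : (M *ᵥ v) i = 0 :=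
  sum_eq_zero fun j _ => by
    by_contra h
    have hMij := hM i j (left_ne_zero_of_mul h)
    rw [hv j (right_ne_zero_of_mul h), hammingDist_zero_right] at hMij
    omega

end Matrix

section FourierOracle

variable {n m : ℕ} {E : Type*}

lemma extMat_hammingLocal (A : Matrix (AIdx n m E) (AIdx n m E) ℂ) :
    (extMat n m E A).HammingLocal (fun p => p.2.2.2) 0 := fun p p' h => by
  rw [extMat, ite_ne_right_iff] at h
  simp [h.1]

variable [DecidableEq E]

lemma HFmat_apply (p p' : QIdx n m E) :
    HFmat n m E p p' = if p.1 = p'.1 ∧ p.2.1 = p'.2.1 ∧ p.2.2.1 = p'.2.2.1 then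
      ((((Real.sqrt 2) ^ (m * 2 ^ n))⁻¹ : ℝ) : ℂ) * hadamardSign p'.2.2.2 p.2.2.2 else 0 :=
  rfl

lemma HFmat_comm (p p' : QIdx n m E) : HFmat n m E p p' = HFmat n m E p' p := by
  simp only [HFmat_apply, eq_comm (a := p.1), eq_comm (a := p.2.1), eq_comm (a := p.2.2.1),
    hadamardSign_comm p.2.2.2]

lemma HFmat_add_right (p : QIdx n m E) (x : Fin n → ZMod 2) (y : Fin m → ZMod 2) (z : E)
    (s δ : (Fin n → ZMod 2) → Fin m → ZMod 2) :
    HFmat n m E p (x, y, z, s + δ) = HFmat n m E p (x, y, z, s) * hadamardSign δ p.2.2.2 := by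
  simp only [HFmat_apply, hadamardSign_add_left, ite_mul, zero_mul, mul_assoc]

variable [Fintype E]

lemma UFOmat_apply (p p' : QIdx n m E) :
    UFOmat n m E p p' = ∑ a : QIdx n m E,
      HFmat n m E p (a.1, a.2.1 + a.2.2.2 a.1, a.2.2.1, a.2.2.2) * HFmat n m E a p' := by
  rw [UFOmat, Matrix.mul_apply]
  refine sum_congr rfl fun a _ => ?_
  simp only [Matrix.mul_apply, UOmat, mul_ite, mul_one, mul_zero, sum_ite_eq', mem_univ, if_true]

lemma UFOmat_eq_zero_of_ne {p p' : QIdx n m E} {x' : Fin n → ZMod 2} (hx' : x' ≠ p'.1) {j : Fin m}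
    (hj : p.2.2.2 x' j ≠ p'.2.2.2 x' j) : UFOmat n m E p p' = 0 := by
  rw [UFOmat_apply]
  simp only [Fintype.sum_prod_type]
  refine sum_eq_zero fun x _ => sum_eq_zero fun y _ => sum_eq_zero fun z _ => ?_
  by_cases hx : x = p'.1
  · subst hx
    set δ : (Fin n → ZMod 2) → Fin m → ZMod 2 := Pi.single x' (Pi.single j 1)
    refine Fintype.sum_eq_zero_of_add_left_eq_neg δ fun s => ?_
    have hs : (δ + s) p'.1 = s p'.1 := by simp [δ, Pi.single_eq_of_ne hx'.symm]
    rw [hs, add_comm δ s, HFmat_add_right, HFmat_comm _ p', HFmat_add_right, HFmat_comm p',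
      hadamardSign_single_left, hadamardSign_single_left]
    linear_combination (HFmat n m E p (p'.1, y + s p'.1, z, s) * HFmat n m E (p'.1, y, z, s) p') *
      neg_one_pow_val_mul_neg_one_pow_val hj
  · simp [HFmat_apply, hx]

lemma UFOmat_hammingLocal : (UFOmat n m E).HammingLocal (fun p => p.2.2.2) 1 :=
  fun _ p' h => hammingDist_le_one_of_forall_ne p'.1 fun _ hx =>
    funext fun _ => not_not.mp fun hj => h (UFOmat_eq_zero_of_ne hx hj)

lemma circuitMat_hammingLocal : ∀ (q : ℕ) (A : Fin (q + 1) → Matrix (AIdx n m E) (AIdx n m E) ℂ),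
    (circuitMat n m E q A).HammingLocal (fun p => p.2.2.2) q
  | 0, A => extMat_hammingLocal (A 0)
  | q + 1, A => by
    have h := ((extMat_hammingLocal (A (Fin.last (q + 1)))).mul UFOmat_hammingLocal).mul
      (circuitMat_hammingLocal q fun i => A i.castSucc)
    rw [zero_add, add_comm 1 q] at h
    exact h

lemma Pmat_mulVec_apply (l : ℕ) (v : QIdx n m E → ℂ) (p : QIdx n m E) :
    (Pmat n m E l *ᵥ v) p = if hammingNorm p.2.2.2 = l then v p else 0 := by
  simp [Matrix.mulVec, dotProduct, Pmat, ite_and, hammingNorm]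

end FourierOracle

variable (n m : ℕ) (E : Type*) [Fintype E] [DecidableEq E] [Nonempty E]

theorem state_in_kernel_of_Pl
    (q : ℕ) (A : Fin (q + 1) → Matrix (AIdx n m E) (AIdx n m E) ℂ)
    (ψ₀ : EuclideanSpace ℂ (AIdx n m E))
    (l : ℕ) (hl : q < l) :
    Matrix.toEuclideanLin (Pmat n m E l)
      (Matrix.toEuclideanLin (circuitMat n m E q A)
        (WithLp.toLp 2 (fun p : QIdx n m E =>
          if p.2.2.2 = 0 then ψ₀ (p.1, p.2.1, p.2.2.1) else 0))) = 0 := by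
  ext p
  simp only [Matrix.toLpLin_apply, PiLp.toLp_apply, PiLp.zero_apply, Pmat_mulVec_apply]
  split_ifs with hp
  · refine (circuitMat_hammingLocal q A).mulVec_apply_eq_zero (fun p' hp' => ?_) (hp ▸ hl)
    by_contra h
    exact hp' (if_neg h)
  · rfl
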